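/- Let Ω be a weighted graph and Ω' a collapsed weighted graph of Ω. Then Ω is t-saturating if and only if Ω' is t-saturating. -/

import Mathlib

open scoped Classical

/-- A matching of a vertex-weighted graph: a multiset of (ordered) edges in which
each vertex `v` appears at most `w v` times. -/
def IsWMatching {V : Type*} (G : SimpleGraph V) (w : V → ℕ) (M : Multiset (V × V)) : Prop :=
  (∀ e ∈ M, G.Adj e.1 e.2) ∧
  ∀ v : V, (M.map Prod.fst).count v + (M.map Prod.snd).count v ≤ w v

/-- The matching number of a vertex-weighted graph. -/
noncomputable def wNu {V : Type*} (G : SimpleGraph V) (w : V → ℕ) : ℕ :=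
  sSup {n | ∃ M : Multiset (V × V), IsWMatching G w M ∧ Multiset.card M = n}

/-- The weighted degree of a vertex: the sum of the weights of its neighbors. -/
noncomputable def wDeg {V : Type*} (G : SimpleGraph V) [Fintype V] (w : V → ℕ) (i : V) : ℕ :=
  ∑ j ∈ Finset.univ.filter (fun j => G.Adj i j), w j

/-- A weighted graph is `t`-saturating if `ν(Ω) < t` and
`ν(Ω − N(i)) ≥ t − deg(i)` for every vertex `i`. -/
def IsTSat {V : Type*} (G : SimpleGraph V) [Fintype V] (w : V → ℕ) (t : ℕ) : Prop :=
  wNu G w < t ∧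
  ∀ i : V, t - wDeg G w i ≤ wNu (G.induce {v | ¬ G.Adj i v}) (fun v => w v.1)

section Helpers

variable {V V' : Type*}

lemma wNu_eq_of_maps {G : SimpleGraph V} {w : V → ℕ} {G' : SimpleGraph V'} {w' : V' → ℕ}
    (h1 : ∀ M, IsWMatching G w M → ∃ M', IsWMatching G' w' M' ∧ Multiset.card M' = Multiset.card M)
    (h2 : ∀ M', IsWMatching G' w' M' → ∃ M, IsWMatching G w M ∧ Multiset.card M = Multiset.card M') :
    wNu G w = wNu G' w' := by
  unfold wNu
  congr 1
  ext n
  constructor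
  · rintro ⟨M, hM, rfl⟩
    obtain ⟨M', h, hc⟩ := h1 M hM
    exact ⟨M', h, hc⟩
  · rintro ⟨M', hM', rfl⟩
    obtain ⟨M, h, hc⟩ := h2 M' hM'
    exact ⟨M, h, hc⟩

lemma card_filter_eq_sum_count [Fintype V] (s : Multiset V) (p : V → Prop) :
    Multiset.card (s.filter p) = ∑ v ∈ Finset.univ.filter p, s.count v :=
  calc Multiset.card (s.filter p)
      = ∑ v ∈ Finset.univ, (s.filter p).count v :=
        (Multiset.sum_count_eq_card (fun a _ => Finset.mem_univ a)).symm
    _ = ∑ v ∈ Finset.univ, if p v then s.count v else 0 :=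
        Finset.sum_congr rfl fun v _ => Multiset.count_filter
    _ = ∑ v ∈ Finset.univ.filter p, s.count v := (Finset.sum_filter _ _).symm

lemma count_map_pi (π : V → V') (s : Multiset V) (v' : V') :
    (s.map π).count v' = Multiset.card (s.filter (fun a => π a = v')) := by
  rw [Multiset.count_map]
  exact congrArg _ (Multiset.filter_congr fun a _ => eq_comm)

lemma exists_distribution [Fintype V] (F : Finset V) (w : V → ℕ) (m : ℕ)
    (hm : m ≤ ∑ v ∈ F, w v) :
    ∃ f : Fin m → V, (∀ j, f j ∈ F) ∧
      ∀ v, (Finset.univ.filter (fun j => f j = v)).card ≤ w v := by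
  have hcard : Fintype.card (Σ v : {v // v ∈ F}, Fin (w v.1)) = ∑ v ∈ F, w v := by
    rw [Fintype.card_sigma]
    simp only [Fintype.card_fin]
    exact Finset.sum_coe_sort F w
  have hm' : m ≤ Fintype.card (Σ v : {v // v ∈ F}, Fin (w v.1)) := by omega
  set e := (Fintype.equivFin (Σ v : {v // v ∈ F}, Fin (w v.1))).symm with he
  refine ⟨fun j => ((e (Fin.castLE hm' j)).1 : V), fun j => (e (Fin.castLE hm' j)).1.2,
    fun v => ?_⟩
  rw [show (Finset.univ.filter (fun j : Fin m => ((e (Fin.castLE hm' j)).1 : V) = v)).card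
      = Fintype.card {j : Fin m // ((e (Fin.castLE hm' j)).1 : V) = v} from
      (Fintype.card_subtype _).symm]
  have hinj : Function.Injective
      (fun j : {j : Fin m // ((e (Fin.castLE hm' j)).1 : V) = v} =>
        (Fin.cast (congrArg w j.2) (e (Fin.castLE hm' j.1)).2 : Fin (w v))) := by
    rintro ⟨j, hj⟩ ⟨j', hj'⟩ hval
    have h2 : ((e (Fin.castLE hm' j)).2 : ℕ) = ((e (Fin.castLE hm' j')).2 : ℕ) := by
      simpa [Fin.ext_iff] using hval
    have h1 : (e (Fin.castLE hm' j)).1 = (e (Fin.castLE hm' j')).1 :=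
      Subtype.ext (hj.trans hj'.symm)
    have hsig : e (Fin.castLE hm' j) = e (Fin.castLE hm' j') :=
      Sigma.ext h1 ((Fin.heq_ext_iff (congrArg w (congrArg Subtype.val h1))).2 h2)
    have := Fin.castLE_injective hm' (e.injective hsig)
    exact Subtype.ext this
  simpa using Fintype.card_le_of_injective _ hinj

lemma swap_pair_multiset {α : Type*} (s : Multiset (α × α)) (σ : α × α → α × α)
    (hσ : ∀ e, σ e = e ∨ σ e = e.swap) :
    (s.map σ).map Prod.fst + (s.map σ).map Prod.snd
      = s.map Prod.fst + s.map Prod.snd := by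
  rw [Multiset.map_map, Multiset.map_map]
  have key : ∀ (f : α × α → α),
      s.map (f ∘ σ) = s.bind (fun e => {f (σ e)}) := by
    intro f
    rw [Multiset.bind_singleton]
    rfl
  have key2 : ∀ (f : α × α → α), s.map f = s.bind (fun e => {f e}) := by
    intro f
    rw [Multiset.bind_singleton]
  rw [key, key, key2 Prod.fst, key2 Prod.snd, ← Multiset.bind_add, ← Multiset.bind_add]
  apply Multiset.bind_congr
  intro e he
  rcases hσ e with h | h <;> rw [h]
  show ({e.2} : Multiset α) + {e.1} = {e.1} + {e.2}
  exact add_comm _ _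

lemma total_count_swap {α : Type*} (s : Multiset (α × α)) (σ : α × α → α × α)
    (hσ : ∀ e, σ e = e ∨ σ e = e.swap) (v : α) :
    ((s.map σ).map Prod.fst).count v + ((s.map σ).map Prod.snd).count v
      = (s.map Prod.fst).count v + (s.map Prod.snd).count v := by
  have := congrArg (Multiset.count v) (swap_pair_multiset s σ hσ)
  simpa [Multiset.count_add] using this

end Helpers

section Abstract

variable {V V' : Type*}

lemma isWMatching_map_collapse [Fintype V]
    {G : SimpleGraph V} {G' : SimpleGraph V'} {w : V → ℕ} {w' : V' → ℕ}
    (π : V → V') (c' : V')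
    (hB : ∀ u v, G.Adj u v ↔ G'.Adj (π u) (π v))
    (hA : ∀ u v, π u = π v → π u ≠ c' → u = v)
    (hC : ∀ v, π v ≠ c' → w' (π v) = w v)
    (hD : ∑ v ∈ Finset.univ.filter (fun v => π v = c'), w v = w' c')
    (M : Multiset (V × V)) (hM : IsWMatching G w M) :
    IsWMatching G' w' (M.map (Prod.map π π)) := by
  obtain ⟨hadj, hcnt⟩ := hM
  constructor
  · intro e he
    obtain ⟨e₀, he₀, rfl⟩ := Multiset.mem_map.1 he
    exact (hB _ _).1 (hadj e₀ he₀)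
  · intro v'
    have hfst : (M.map (Prod.map π π)).map Prod.fst = (M.map Prod.fst).map π := by
      rw [Multiset.map_map, Multiset.map_map]; rfl
    have hsnd : (M.map (Prod.map π π)).map Prod.snd = (M.map Prod.snd).map π := by
      rw [Multiset.map_map, Multiset.map_map]; rfl
    rw [hfst, hsnd]
    by_cases hc : v' = c'
    · subst hc
      rw [count_map_pi, count_map_pi, card_filter_eq_sum_count, card_filter_eq_sum_count,
        ← hD, ← Finset.sum_add_distrib]
      exact Finset.sum_le_sum fun v _ => hcnt v
    · by_cases hex : ∃ u, π u = v'
      · obtain ⟨u, rfl⟩ := hex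
        have h1 : ∀ s : Multiset V, (s.map π).count (π u) = s.count u := by
          intro s
          rw [count_map_pi, Multiset.count_eq_card_filter_eq]
          exact congrArg _ (Multiset.filter_congr fun a _ =>
            ⟨fun h => (hA a u h (h ▸ hc)).symm ▸ rfl, fun h => by rw [← h]⟩)
        rw [h1, h1, hC u hc]
        exact hcnt u
      · have h0 : ∀ s : Multiset V, (s.map π).count v' = 0 := by
          intro s
          rw [count_map_pi]
          rw [Multiset.filter_eq_nil.2 fun a _ => fun h => hex ⟨a, h⟩]
          simp
        rw [h0, h0]
        simp

end Abstract

section Split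

variable {V V' : Type*}

lemma exists_split_matching [Fintype V]
    {G : SimpleGraph V} {G' : SimpleGraph V'} {w : V → ℕ} {w' : V' → ℕ}
    (π : V → V') (c' : V')
    (hsurj : Function.Surjective π)
    (hB : ∀ u v, G.Adj u v ↔ G'.Adj (π u) (π v))
    (hA : ∀ u v, π u = π v → π u ≠ c' → u = v)
    (hC : ∀ v, π v ≠ c' → w' (π v) = w v)
    (hD : ∑ v ∈ Finset.univ.filter (fun v => π v = c'), w v = w' c')
    (M' : Multiset (V' × V')) (hM' : IsWMatching G' w' M') :
    ∃ M : Multiset (V × V), IsWMatching G w M ∧ Multiset.card M = Multiset.card M' := by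
  obtain ⟨hadj', hcnt'⟩ := hM'
  choose s hs using hsurj
  have hsinj : Function.Injective s := fun a b h => by rw [← hs a, ← hs b, h]
  have hsec : ∀ v, π v ≠ c' → s (π v) = v := fun v hv => hA _ _ (hs (π v)) (by rw [hs]; exact hv)
  set σ : V' × V' → V' × V' := fun e => if e.1 = c' then e.swap else e with hσdef
  have hσ : ∀ e, σ e = e ∨ σ e = e.swap := by
    intro e
    by_cases h : e.1 = c'
    · right; simp [hσdef, h]
    · left; simp [hσdef, h]
  set M₀ := M'.map σ with hM₀def
  have hM₀adj : ∀ e ∈ M₀, G'.Adj e.1 e.2 := by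
    intro e he
    obtain ⟨e₀, he₀, rfl⟩ := Multiset.mem_map.1 he
    rcases hσ e₀ with h | h <;> rw [h]
    · exact hadj' e₀ he₀
    · exact (hadj' e₀ he₀).symm
  have hM₀fst : ∀ e ∈ M₀, e.1 ≠ c' := by
    intro e he
    obtain ⟨e₀, he₀, rfl⟩ := Multiset.mem_map.1 he
    by_cases h : e₀.1 = c'
    · have hswap : σ e₀ = e₀.swap := by simp [hσdef, h]
      rw [hswap]
      intro hc
      have hadj := hadj' e₀ he₀
      rw [show (e₀.swap.1 : V') = e₀.2 from rfl] at hc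
      rw [h, hc] at hadj
      exact G'.irrefl hadj
    · have hid : σ e₀ = e₀ := by simp [hσdef, h]
      rw [hid]; exact h
  have hM₀cnt : ∀ v', (M₀.map Prod.fst).count v' + (M₀.map Prod.snd).count v' ≤ w' v' := by
    intro v'
    rw [hM₀def, total_count_swap M' σ hσ v']
    exact hcnt' v'
  have hM₀card : Multiset.card M₀ = Multiset.card M' := Multiset.card_map _ _
  set M₂ := M₀.filter (fun e => e.2 = c') with hM₂def
  set M₁ := M₀.filter (fun e => ¬ e.2 = c') with hM₁def
  have hsplit : M₂ + M₁ = M₀ := Multiset.filter_add_not _ _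
  set L := M₂.toList with hLdef
  have hLM : (L : Multiset (V' × V')) = M₂ := Multiset.coe_toList _
  have hLlen : L.length = Multiset.card M₂ := Multiset.length_toList _
  have hmb : L.length ≤ ∑ v ∈ Finset.univ.filter (fun v => π v = c'), w v := by
    rw [hD]
    have h2 : Multiset.card M₂ = (M₀.map Prod.snd).count c' := by
      rw [count_map_pi]
    calc L.length = Multiset.card M₂ := hLlen
      _ ≤ (M₀.map Prod.fst).count c' + (M₀.map Prod.snd).count c' := by rw [h2]; omega
      _ ≤ w' c' := hM₀cnt c'
  obtain ⟨f, hfF, hfcard⟩ := exists_distribution _ w L.length hmb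
  have hfc : ∀ j, π (f j) = c' := fun j => (Finset.mem_filter.1 (hfF j)).2
  set M₁'' := M₁.map (Prod.map s s) with hM₁''def
  set M₂'' := (Finset.univ.val : Multiset (Fin L.length)).map
      (fun j => (s (L.get j).1, f j)) with hM₂''def
  have hgetmem : ∀ j : Fin L.length, L.get j ∈ M₂ := by
    intro j; rw [← hLM]; exact Multiset.mem_coe.mpr (List.get_mem L j)
  have hM₂e : ∀ e ∈ M₂, e.1 ≠ c' ∧ e.2 = c' ∧ G'.Adj e.1 e.2 := by
    intro e he
    rw [hM₂def] at he
    have h1 := Multiset.mem_of_mem_filter he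
    have h2 := Multiset.of_mem_filter he
    exact ⟨hM₀fst e h1, h2, hM₀adj e h1⟩
  have hM₁e : ∀ e ∈ M₁, e.1 ≠ c' ∧ e.2 ≠ c' ∧ G'.Adj e.1 e.2 := by
    intro e he
    rw [hM₁def] at he
    have h1 := Multiset.mem_of_mem_filter he
    have h2 := Multiset.of_mem_filter he
    exact ⟨hM₀fst e h1, h2, hM₀adj e h1⟩
  have huniv : ∀ (φ : V' × V' → V),
      (Finset.univ.val.map (fun j : Fin L.length => φ (L.get j))) = M₂.map φ := by
    intro φ
    rw [Fin.univ_val_map]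
    rw [show (List.ofFn (fun j => φ (L.get j))) = L.map φ from List.ofFn_getElem_eq_map L φ]
    rw [← hLM]
    rfl
  have hM₂''fst : M₂''.map Prod.fst = (M₂.map Prod.fst).map s := by
    rw [hM₂''def, Multiset.map_map, Multiset.map_map]
    exact huniv (fun e => s e.1)
  have hM₂''snd : M₂''.map Prod.snd = (Finset.univ.val : Multiset (Fin L.length)).map f := by
    rw [hM₂''def, Multiset.map_map]
    rfl
  have hM₁''fst : M₁''.map Prod.fst = (M₁.map Prod.fst).map s := by
    rw [hM₁''def, Multiset.map_map, Multiset.map_map]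
    rfl
  have hM₁''snd : M₁''.map Prod.snd = (M₁.map Prod.snd).map s := by
    rw [hM₁''def, Multiset.map_map, Multiset.map_map]
    rfl
  have hM₂''sndcnt : ∀ v, (M₂''.map Prod.snd).count v ≤ w v := by
    intro v
    rw [hM₂''snd, count_map_pi]
    have hcv : Multiset.card (Finset.univ.val.filter (fun j : Fin L.length => f j = v))
        = (Finset.univ.filter (fun j : Fin L.length => f j = v)).card := by
      rw [Finset.card_def, Finset.filter_val]
    rw [hcv]
    exact hfcard v
  refine ⟨M₁'' + M₂'', ⟨?_, ?_⟩, ?_⟩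
  · -- adjacency
    intro e he
    rcases Multiset.mem_add.1 he with h | h
    · obtain ⟨e₀, he₀, rfl⟩ := Multiset.mem_map.1 h
      refine (hB _ _).2 ?_
      show G'.Adj (π (s e₀.1)) (π (s e₀.2))
      rw [hs, hs]
      exact (hM₁e e₀ he₀).2.2
    · obtain ⟨j, _, rfl⟩ := Multiset.mem_map.1 h
      refine (hB _ _).2 ?_
      show G'.Adj (π (s (L.get j).1)) (π (f j))
      rw [hs, hfc j]
      obtain ⟨h1, h2, h3⟩ := hM₂e _ (hgetmem j)
      rw [← h2]
      exact h3
  · -- counts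
    intro v
    rw [Multiset.map_add, Multiset.map_add, Multiset.count_add, Multiset.count_add]
    by_cases hv : π v = c'
    · have z1 : (M₁''.map Prod.fst).count v = 0 := by
        apply Multiset.count_eq_zero_of_notMem
        intro hmem
        rw [hM₁''fst] at hmem
        obtain ⟨a, ha, hav⟩ := Multiset.mem_map.1 hmem
        obtain ⟨e₀, he₀, rfl⟩ := Multiset.mem_map.1 ha
        have : π (s e₀.1) = c' := by rw [hav]; exact hv
        rw [hs] at this
        exact (hM₁e e₀ he₀).1 this
      have z2 : (M₁''.map Prod.snd).count v = 0 := by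
        apply Multiset.count_eq_zero_of_notMem
        intro hmem
        rw [hM₁''snd] at hmem
        obtain ⟨a, ha, hav⟩ := Multiset.mem_map.1 hmem
        obtain ⟨e₀, he₀, rfl⟩ := Multiset.mem_map.1 ha
        have : π (s e₀.2) = c' := by rw [hav]; exact hv
        rw [hs] at this
        exact (hM₁e e₀ he₀).2.1 this
      have z3 : (M₂''.map Prod.fst).count v = 0 := by
        apply Multiset.count_eq_zero_of_notMem
        intro hmem
        rw [hM₂''fst] at hmem
        obtain ⟨a, ha, hav⟩ := Multiset.mem_map.1 hmem
        obtain ⟨e₀, he₀, rfl⟩ := Multiset.mem_map.1 ha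
        have : π (s e₀.1) = c' := by rw [hav]; exact hv
        rw [hs] at this
        exact (hM₂e e₀ he₀).1 this
      have z4 := hM₂''sndcnt v
      have hwv : w v ≤ w v := le_refl _
      omega
    · have hv' : s (π v) = v := hsec v hv
      have c1 : (M₁''.map Prod.fst).count v = (M₁.map Prod.fst).count (π v) := by
        conv_lhs => rw [hM₁''fst, ← hv']
        exact Multiset.count_map_eq_count' s _ hsinj _
      have c2 : (M₁''.map Prod.snd).count v = (M₁.map Prod.snd).count (π v) := by
        conv_lhs => rw [hM₁''snd, ← hv']
        exact Multiset.count_map_eq_count' s _ hsinj _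
      have c3 : (M₂''.map Prod.fst).count v = (M₂.map Prod.fst).count (π v) := by
        conv_lhs => rw [hM₂''fst, ← hv']
        exact Multiset.count_map_eq_count' s _ hsinj _
      have c4 : (M₂''.map Prod.snd).count v = 0 := by
        apply Multiset.count_eq_zero_of_notMem
        intro hmem
        rw [hM₂''snd] at hmem
        obtain ⟨j, _, hj⟩ := Multiset.mem_map.1 hmem
        exact hv (by rw [← hj]; exact hfc j)
      have e1 : (M₀.map Prod.fst).count (π v)
          = (M₂.map Prod.fst).count (π v) + (M₁.map Prod.fst).count (π v) := by
        rw [← hsplit, Multiset.map_add, Multiset.count_add]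
      have e2 : (M₀.map Prod.snd).count (π v)
          = (M₂.map Prod.snd).count (π v) + (M₁.map Prod.snd).count (π v) := by
        rw [← hsplit, Multiset.map_add, Multiset.count_add]
      have hb := hM₀cnt (π v)
      have hw := hC v hv
      omega
  · -- cardinality
    rw [Multiset.card_add, hM₁''def, hM₂''def, Multiset.card_map, Multiset.card_map]
    have : Multiset.card (Finset.univ.val : Multiset (Fin L.length)) = L.length := by
      rw [← Finset.card_def, Finset.card_univ, Fintype.card_fin]
    rw [this, hLlen, ← hM₀card, ← hsplit, Multiset.card_add]
    omega

end Split

section Combine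

variable {V V' : Type*}

lemma wNu_collapse [Fintype V]
    {G : SimpleGraph V} {G' : SimpleGraph V'} {w : V → ℕ} {w' : V' → ℕ}
    (π : V → V') (c' : V')
    (hsurj : Function.Surjective π)
    (hB : ∀ u v, G.Adj u v ↔ G'.Adj (π u) (π v))
    (hA : ∀ u v, π u = π v → π u ≠ c' → u = v)
    (hC : ∀ v, π v ≠ c' → w' (π v) = w v)
    (hD : ∑ v ∈ Finset.univ.filter (fun v => π v = c'), w v = w' c') :
    wNu G w = wNu G' w' :=
  wNu_eq_of_maps
    (fun M hM => ⟨M.map (Prod.map π π),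
      isWMatching_map_collapse π c' hB hA hC hD M hM, Multiset.card_map _ _⟩)
    (fun M' hM' => exists_split_matching π c' hsurj hB hA hC hD M' hM')

end Combine


/-- The polarization of a weighted graph: each vertex `v` is replaced by `w v` copies. -/
def polarize {V : Type*} (G : SimpleGraph V) (w : V → ℕ) :
    SimpleGraph (Σ v : V, Fin (w v)) where
  Adj a b := G.Adj a.1 b.1
  symm := ⟨fun _ _ h => G.adj_symm h⟩
  loopless := ⟨fun a h => G.irrefl h⟩
/-- The graph obtained from `H` on `W` by adding `r` new pairwise non-adjacent
vertices, each with neighborhood exactly `N ⊆ W`. Taking `r` vertices and then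
`r = 1` (with summed weight) models a weighted graph and its collapse. -/
def collapseBig {W : Type*} (H : SimpleGraph W) (N : Set W) (r : ℕ) :
    SimpleGraph (W ⊕ Fin r) where
  Adj a b :=
    (∃ x y, a = Sum.inl x ∧ b = Sum.inl y ∧ H.Adj x y) ∨
    (∃ x i, a = Sum.inl x ∧ b = Sum.inr i ∧ x ∈ N) ∨
    (∃ x i, a = Sum.inr i ∧ b = Sum.inl x ∧ x ∈ N)
  symm := by
    constructor
    rintro a b (⟨x, y, rfl, rfl, h⟩ | ⟨x, i, rfl, rfl, h⟩ | ⟨x, i, rfl, rfl, h⟩)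
    · exact Or.inl ⟨y, x, rfl, rfl, h.symm⟩
    · exact Or.inr (Or.inr ⟨x, i, rfl, rfl, h⟩)
    · exact Or.inr (Or.inl ⟨x, i, rfl, rfl, h⟩)
  loopless := by
    constructor
    rintro a (⟨x, y, rfl, h1, h⟩ | ⟨x, i, rfl, h1, h⟩ | ⟨x, i, rfl, h1, h⟩)
    · obtain rfl := Sum.inl.inj h1; exact H.irrefl h
    · cases h1
    · cases h1

section CB
variable {W : Type*} {H : SimpleGraph W} {N : Set W} {r : ℕ}

@[simp] lemma collapseBig_adj_inl_inl {x y : W} :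
    (collapseBig H N r).Adj (Sum.inl x) (Sum.inl y) ↔ H.Adj x y := by
  constructor
  · rintro (⟨a, b, h1, h2, h⟩ | ⟨a, i, h1, h2, h⟩ | ⟨a, i, h1, h2, h⟩)
    · obtain rfl := Sum.inl.inj h1; obtain rfl := Sum.inl.inj h2; exact h
    · cases h2
    · cases h1
  · exact fun h => Or.inl ⟨x, y, rfl, rfl, h⟩

@[simp] lemma collapseBig_adj_inl_inr {x : W} {i : Fin r} :
    (collapseBig H N r).Adj (Sum.inl x) (Sum.inr i) ↔ x ∈ N := by
  constructor
  · rintro (⟨a, b, h1, h2, h⟩ | ⟨a, j, h1, h2, h⟩ | ⟨a, j, h1, h2, h⟩)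
    · cases h2
    · obtain rfl := Sum.inl.inj h1; exact h
    · cases h1
  · exact fun h => Or.inr (Or.inl ⟨x, i, rfl, rfl, h⟩)

@[simp] lemma collapseBig_adj_inr_inl {x : W} {i : Fin r} :
    (collapseBig H N r).Adj (Sum.inr i) (Sum.inl x) ↔ x ∈ N := by
  constructor
  · rintro (⟨a, b, h1, h2, h⟩ | ⟨a, j, h1, h2, h⟩ | ⟨a, j, h1, h2, h⟩)
    · cases h1
    · cases h1
    · obtain rfl := Sum.inl.inj h2; exact h
  · exact fun h => Or.inr (Or.inr ⟨x, i, rfl, rfl, h⟩)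

@[simp] lemma collapseBig_adj_inr_inr {i j : Fin r} :
    ¬ (collapseBig H N r).Adj (Sum.inr i) (Sum.inr j) := by
  rintro (⟨a, b, h1, h2, h⟩ | ⟨a, k, h1, h2, h⟩ | ⟨a, k, h1, h2, h⟩)
  · cases h1
  · cases h1
  · cases h2

end CB

section App
variable {W : Type*} [Fintype W] {H : SimpleGraph W} {N : Set W} {r : ℕ}
  {wW : W → ℕ} {wv : Fin r → ℕ}

def collapseMap (W : Type*) (r : ℕ) : W ⊕ Fin r → W ⊕ Fin 1 := Sum.map id fun _ => 0

@[simp] lemma collapseMap_inl (x : W) : collapseMap W r (Sum.inl x) = Sum.inl x := rfl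
@[simp] lemma collapseMap_inr (i : Fin r) :
    (collapseMap W r (Sum.inr i) : W ⊕ Fin 1) = Sum.inr 0 := rfl

lemma cb_hB : ∀ u v : W ⊕ Fin r,
    (collapseBig H N r).Adj u v ↔
      (collapseBig H N 1).Adj (collapseMap W r u) (collapseMap W r v) := by
  rintro (x | i) (y | j) <;> simp

lemma cb_wNu_top (hr : 0 < r) :
    wNu (collapseBig H N r) (Sum.elim wW wv)
      = wNu (collapseBig H N 1) (Sum.elim wW (fun _ => ∑ i, wv i)) := by
  apply wNu_collapse (collapseMap W r) (Sum.inr 0)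
  · rintro (y | j)
    · exact ⟨Sum.inl y, rfl⟩
    · exact ⟨Sum.inr ⟨0, hr⟩, by simp [Subsingleton.elim (0 : Fin 1) j]⟩
  · exact cb_hB
  · rintro (x | i) (y | j) h hne
    · simpa using h
    · exact absurd h (by simp)
    · exact absurd h (by simp)
    · exact absurd rfl hne
  · rintro (x | i) h
    · rfl
    · exact absurd rfl h
  · rw [Finset.sum_filter, Fintype.sum_sum_type]
    simp

lemma sum_fiber_inr {S : Set (W ⊕ Fin r)} [Fintype ↥S] (hS : ∀ i : Fin r, Sum.inr i ∈ S)
    (p : ↥S → Prop) (hp : ∀ v : ↥S, p v ↔ ∃ i, v.1 = Sum.inr i) (i₀ : Fin r) :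
    ∑ v ∈ Finset.univ.filter p, Sum.elim wW wv v.1 = ∑ i, wv i := by
  refine Finset.sum_bij' (fun v _ => Sum.elim (fun _ => i₀) id v.1)
    (fun i _ => ⟨Sum.inr i, hS i⟩) (fun _ _ => Finset.mem_univ _) ?_ ?_ ?_ ?_
  · intro i _
    exact Finset.mem_filter.2 ⟨Finset.mem_univ _, (hp _).2 ⟨i, rfl⟩⟩
  · intro a ha
    obtain ⟨i, hi⟩ := (hp a).1 (Finset.mem_filter.1 ha).2
    exact Subtype.ext (by simp [hi])
  · intro i _
    rfl
  · intro a ha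
    obtain ⟨i, hi⟩ := (hp a).1 (Finset.mem_filter.1 ha).2
    simp [hi]

lemma cb_wNu_induced_inr (idx : Fin r) :
    wNu ((collapseBig H N r).induce {v | ¬ (collapseBig H N r).Adj (Sum.inr idx) v})
        (fun v => Sum.elim wW wv v.1)
      = wNu ((collapseBig H N 1).induce {v | ¬ (collapseBig H N 1).Adj (Sum.inr 0) v})
        (fun v => Sum.elim wW (fun _ => ∑ i, wv i) v.1) := by
  set S : Set (W ⊕ Fin r) := {v | ¬ (collapseBig H N r).Adj (Sum.inr idx) v} with hS
  set S' : Set (W ⊕ Fin 1) := {v | ¬ (collapseBig H N 1).Adj (Sum.inr 0) v} with hS'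
  have hmem : ∀ u : W ⊕ Fin r, u ∈ S ↔ collapseMap W r u ∈ S' := by
    rintro (y | j) <;> simp [hS, hS', Set.mem_setOf_eq]
  have hSr : ∀ i : Fin r, Sum.inr i ∈ S := fun i => by simp [hS, Set.mem_setOf_eq]
  have hS0 : (Sum.inr 0 : W ⊕ Fin 1) ∈ S' := by simp [hS', Set.mem_setOf_eq]
  apply wNu_collapse (fun v : ↥S => (⟨collapseMap W r v.1, (hmem v.1).1 v.2⟩ : ↥S'))
    (⟨Sum.inr 0, hS0⟩ : ↥S')
  · rintro ⟨(y | j), hv⟩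
    · exact ⟨⟨Sum.inl y, (hmem (Sum.inl y)).2 (by simpa using hv)⟩, rfl⟩
    · exact ⟨⟨Sum.inr idx, hSr idx⟩, Subtype.ext (by simp [Subsingleton.elim (0 : Fin 1) j])⟩
  · intro u v
    exact cb_hB u.1 v.1
  · rintro ⟨(a | i), ha⟩ ⟨(b | j), hb⟩ h hne
    · apply Subtype.ext
      simpa using congrArg Subtype.val h
    · exact absurd (congrArg Subtype.val h) (by simp)
    · exact absurd (congrArg Subtype.val h) (by simp)
    · exact absurd (Subtype.ext (by simp)) hne
  · rintro ⟨(a | i), ha⟩ h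
    · rfl
    · exact absurd (Subtype.ext (by simp)) h
  · refine sum_fiber_inr hSr _ ?_ idx
    rintro ⟨(y | j), hv⟩
    · constructor
      · intro h
        exact absurd (congrArg Subtype.val h) (by simp)
      · rintro ⟨i, hi⟩
        cases hi
    · constructor
      · intro _
        exact ⟨j, rfl⟩
      · intro _
        exact Subtype.ext (by simp)

lemma cb_wNu_induced_inl (hr : 0 < r) (x : W) :
    wNu ((collapseBig H N r).induce {v | ¬ (collapseBig H N r).Adj (Sum.inl x) v})
        (fun v => Sum.elim wW wv v.1)
      = wNu ((collapseBig H N 1).induce {v | ¬ (collapseBig H N 1).Adj (Sum.inl x) v})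
        (fun v => Sum.elim wW (fun _ => ∑ i, wv i) v.1) := by
  set S : Set (W ⊕ Fin r) := {v | ¬ (collapseBig H N r).Adj (Sum.inl x) v} with hS
  set S' : Set (W ⊕ Fin 1) := {v | ¬ (collapseBig H N 1).Adj (Sum.inl x) v} with hS'
  have hmem : ∀ u : W ⊕ Fin r, u ∈ S ↔ collapseMap W r u ∈ S' := by
    rintro (y | j) <;> simp [hS, hS', Set.mem_setOf_eq]
  have hsurj : Function.Surjective
      (fun v : ↥S => (⟨collapseMap W r v.1, (hmem v.1).1 v.2⟩ : ↥S')) := by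
    rintro ⟨(y | j), hv⟩
    · exact ⟨⟨Sum.inl y, (hmem (Sum.inl y)).2 (by simpa using hv)⟩, rfl⟩
    · have hxN : x ∉ N := by
        intro hxN
        exact hv (by simp [hS', Set.mem_setOf_eq, hxN])
      refine ⟨⟨Sum.inr ⟨0, hr⟩, ?_⟩, Subtype.ext (by simp [Subsingleton.elim (0 : Fin 1) j])⟩
      simp [hS, Set.mem_setOf_eq, hxN]
  have hB : ∀ u v : ↥S,
      ((collapseBig H N r).induce S).Adj u v ↔
        ((collapseBig H N 1).induce S').Adj
          (⟨collapseMap W r u.1, (hmem u.1).1 u.2⟩ : ↥S')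
          (⟨collapseMap W r v.1, (hmem v.1).1 v.2⟩ : ↥S') := fun u v => cb_hB u.1 v.1
  by_cases hxN : x ∈ N
  · -- no inr vertices in S; the map is a bijection, collapsed vertex is ⟨inl x⟩
    have hSx : (Sum.inl x : W ⊕ Fin r) ∈ S := by
      simp [hS, Set.mem_setOf_eq]
    have hS'x : (Sum.inl x : W ⊕ Fin 1) ∈ S' := by
      simp [hS', Set.mem_setOf_eq]
    have hnoinr : ∀ (i : Fin r), (Sum.inr i : W ⊕ Fin r) ∉ S := by
      intro i hi
      exact hi (by simp [hS, Set.mem_setOf_eq, hxN])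
    apply wNu_collapse (fun v : ↥S => (⟨collapseMap W r v.1, (hmem v.1).1 v.2⟩ : ↥S'))
      (⟨Sum.inl x, hS'x⟩ : ↥S') hsurj hB
    · rintro ⟨(a | i), ha⟩ ⟨(b | j), hb⟩ h hne
      · apply Subtype.ext
        simpa using congrArg Subtype.val h
      · exact absurd hb (hnoinr j)
      · exact absurd ha (hnoinr i)
      · exact absurd ha (hnoinr i)
    · rintro ⟨(a | i), ha⟩ h
      · rfl
      · exact absurd ha (hnoinr i)
    · rw [Finset.sum_filter]
      refine Eq.trans (Finset.sum_eq_single (⟨Sum.inl x, hSx⟩ : ↥S) ?_ ?_) ?_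
      · rintro ⟨(a | i), ha⟩ _ hne
        · rw [if_neg]
          intro hcontra
          apply hne
          have := congrArg Subtype.val hcontra
          simp only [collapseMap_inl] at this
          exact Subtype.ext (by simpa using this)
        · exact absurd ha (hnoinr i)
      · intro h
        exact absurd (Finset.mem_univ _) h
      · rw [if_pos (Subtype.ext (by simp))]
        rfl
  · -- x ∉ N : all inr vertices are in S, collapsed vertex is ⟨inr 0⟩
    have hSr : ∀ i : Fin r, Sum.inr i ∈ S := fun i => by
      simp [hS, Set.mem_setOf_eq, hxN]
    have hS0 : (Sum.inr 0 : W ⊕ Fin 1) ∈ S' := by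
      simp [hS', Set.mem_setOf_eq, hxN]
    apply wNu_collapse (fun v : ↥S => (⟨collapseMap W r v.1, (hmem v.1).1 v.2⟩ : ↥S'))
      (⟨Sum.inr 0, hS0⟩ : ↥S') hsurj hB
    · rintro ⟨(a | i), ha⟩ ⟨(b | j), hb⟩ h hne
      · apply Subtype.ext
        simpa using congrArg Subtype.val h
      · exact absurd (congrArg Subtype.val h) (by simp)
      · exact absurd (congrArg Subtype.val h) (by simp)
      · exact absurd (Subtype.ext (by simp)) hne
    · rintro ⟨(a | i), ha⟩ h
      · rfl
      · exact absurd (Subtype.ext (by simp)) h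
    · refine sum_fiber_inr hSr _ ?_ ⟨0, hr⟩
      rintro ⟨(y | j), hv⟩
      · constructor
        · intro h
          exact absurd (congrArg Subtype.val h) (by simp)
        · rintro ⟨i, hi⟩
          cases hi
      · constructor
        · intro _
          exact ⟨j, rfl⟩
        · intro _
          exact Subtype.ext (by simp)

end App


section Deg
variable {W : Type*} [Fintype W] {H : SimpleGraph W} {N : Set W} {r : ℕ}
  {wW : W → ℕ} {wv : Fin r → ℕ}

lemma cb_wDeg_inl (x : W) :
    wDeg (collapseBig H N r) (Sum.elim wW wv) (Sum.inl x)
      = wDeg (collapseBig H N 1) (Sum.elim wW (fun _ => ∑ i, wv i)) (Sum.inl x) := by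
  unfold wDeg
  rw [Finset.sum_filter, Finset.sum_filter, Fintype.sum_sum_type, Fintype.sum_sum_type]
  by_cases hx : x ∈ N <;> simp [hx]

lemma cb_wDeg_inr (i : Fin r) :
    wDeg (collapseBig H N r) (Sum.elim wW wv) (Sum.inr i)
      = wDeg (collapseBig H N 1) (Sum.elim wW (fun _ => ∑ i, wv i)) (Sum.inr 0) := by
  unfold wDeg
  rw [Finset.sum_filter, Finset.sum_filter, Fintype.sum_sum_type, Fintype.sum_sum_type]
  simp

end Deg


/-- A weighted graph is `t`-saturating iff its collapsed weighted graph is `t`-saturating. -/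
theorem isTSat_collapse_iff {W : Type*} [Fintype W] (H : SimpleGraph W) (N : Set W)
    (r : ℕ) (hr : 0 < r) (wW : W → ℕ) (wv : Fin r → ℕ)
    (hwW : ∀ x, 0 < wW x) (hwv : ∀ i, 0 < wv i) (t : ℕ) :
    IsTSat (collapseBig H N r) (Sum.elim wW wv) t ↔
      IsTSat (collapseBig H N 1) (Sum.elim wW (fun _ => ∑ i, wv i)) t := by
  unfold IsTSat
  apply and_congr
  · rw [cb_wNu_top hr]
  · constructor
    · rintro h (y | j)
      · have := h (Sum.inl y)
        rwa [cb_wDeg_inl, cb_wNu_induced_inl hr] at this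
      · have := h (Sum.inr ⟨0, hr⟩)
        rw [cb_wDeg_inr, cb_wNu_induced_inr] at this
        rwa [Subsingleton.elim j (0 : Fin 1)]
    · rintro h (y | i)
      · have := h (Sum.inl y)
        rwa [← cb_wDeg_inl, ← cb_wNu_induced_inl hr] at this
      · have := h (Sum.inr 0)
        rwa [← cb_wDeg_inr i, ← cb_wNu_induced_inr i] at this
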